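/- Let X = (X_1,...,X_n) be i.u.d. and let Y =d X↓^μ be a rearrangement of X satisfying the strong rank independence condition. If the value data X↓ and the arrival data μ are independent, then Y is a constant rearrangement: μ almost surely takes a single value in S_n, i.e., Y =d X↓^s for some fixed permutation s ∈ S_n. -/

import Mathlib

open MeasureTheory

/-- `X = (X_1,...,X_n)` is i.u.d. -/
def IsIUD {Ω : Type} [MeasurableSpace Ω] (P : Measure Ω) {n : ℕ}
    (X : Ω → Fin n → ℝ) : Prop :=
  (∀ i, Measurable fun ω => X ω i) ∧
  ProbabilityTheory.iIndepFun (fun i ω => X ω i) P ∧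
  ∀ i, P.map (fun ω => X ω i) = volume.restrict (Set.Icc (0:ℝ) 1)

/-- The ascending arrangement of a tuple. -/
noncomputable def ascArr (n : ℕ) (a : Fin n → ℝ) : Fin n → ℝ := a ∘ Tuple.sort a

/-- The descending arrangement of a tuple. -/
noncomputable def descArr (n : ℕ) (a : Fin n → ℝ) : Fin n → ℝ := fun i => ascArr n a i.rev

/-- The initial rank (0-indexed: `irank y k` is the paper's `R_{k+1}`). -/
noncomputable def irank {n : ℕ} (y : Fin n → ℝ) (k : Fin n) : ℕ :=
  1 + (Finset.univ.filter (fun i : Fin n => i < k ∧ y k < y i)).card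

/-!
Write `D = X↓` and `Z = D^μ`; `Z` has the law of `Y`, so it inherits strong rank independence.
Almost surely `D` is strictly decreasing, and then the initial ranks of `Z` are those of the
permutation `μ`. Induct on the position `k`: once all permutations in the support of `μ` agree
before `k`, the ranks `R_{k+1}, …, R_n` determine `μ` on its support, so each event `{μ = s}`
is, up to a null set, a rank event and is therefore independent of `Z_k`. As `μ` is independent
of `D`, this makes `D_{s(k)}` distributed like `Z_k` for every `s` in the support. Since
`D_1 > ⋯ > D_n` almost surely, distinct order statistics have distinct laws, so `s(k)` does not
depend on `s`.
-/

open ProbabilityTheory Finset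

theorem measurable_apply_of_measurableSet_fiber {Ω β γ : Type*} [MeasurableSpace Ω]
    [Countable β] [MeasurableSpace γ] {g : Ω → β} (hg : ∀ b, MeasurableSet {ω | g ω = b})
    {f : β → Ω → γ} (hf : ∀ b, Measurable (f b)) : Measurable fun ω => f (g ω) ω := by
  intro S hS
  have : (fun ω => f (g ω) ω) ⁻¹' S = ⋃ b, {ω | g ω = b} ∩ f b ⁻¹' S := by
    ext ω
    simp
  rw [this]
  exact .iUnion fun b => (hg b).inter (hf b hS)

theorem measurableSet_sort_eq {α : Type*} [LinearOrder α] [TopologicalSpace α]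
    [OrderClosedTopology α] [SecondCountableTopology α] [MeasurableSpace α]
    [OpensMeasurableSpace α] {n : ℕ} (σ : Equiv.Perm (Fin n)) :
    MeasurableSet {a : Fin n → α | Tuple.sort a = σ} := by
  simp_rw [eq_comm (a := Tuple.sort _), Tuple.eq_sort_iff, Monotone, Function.comp_apply]
  exact measurableSet_setOfPred.mpr (by fun_prop)

theorem measurable_descArr (n : ℕ) : Measurable (descArr n) :=
  measurable_pi_lambda _ fun i =>
    measurable_apply_of_measurableSet_fiber (g := Tuple.sort) measurableSet_sort_eq
      (f := fun σ a => a (σ i.rev)) fun _ => measurable_pi_apply _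

theorem measurable_irank {n : ℕ} (ℓ : Fin n) : Measurable fun y => irank y ℓ := by
  simp only [irank, Finset.card_filter]
  refine measurable_const.add (Finset.measurable_sum _ fun i _ => Measurable.ite ?_
    measurable_const measurable_const)
  exact measurableSet_setOfPred.mpr (by fun_prop)

namespace Equiv.Perm

variable {n : ℕ}

def initialRank (s : Perm (Fin n)) (ℓ : Fin n) : ℕ :=
  1 + #{i | i < ℓ ∧ s i < s ℓ}

theorem eq_of_forall_ne_apply_eq {α : Type*} {s t : Perm α} {k : α}
    (h : ∀ i, i ≠ k → s i = t i) : s = t := by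
  ext i
  by_cases hi : i = k
  · subst hi
    obtain ⟨j, hj⟩ := t.surjective (s i)
    have hji : j = i := by_contra fun hji => hji (s.injective ((h j hji).trans hj))
    rw [← hj, hji]
  · exact h i hi

theorem card_filter_le_apply_lt_eq {s t : Perm (Fin n)} {ℓ : Fin n}
    (htail : ∀ j, ℓ < j → s j = t j) (v : Fin n) :
    #{i | i ≤ ℓ ∧ s i < v} = #{i | i ≤ ℓ ∧ t i < v} := by
  have hsplit (u : Perm (Fin n)) :
      #{i | i ≤ ℓ ∧ u i < v} + #{i | ℓ < i ∧ u i < v} = #{w : Fin n | w < v} := by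
    rw [← card_union_of_disjoint (disjoint_filter.mpr fun i _ h₁ h₂ => (not_lt.mpr h₁.1) h₂.1),
      ← filter_or]
    exact card_equiv u fun i => by simp [← or_and_right, le_or_gt]
  have htail_card : #{i | ℓ < i ∧ s i < v} = #{i | ℓ < i ∧ t i < v} :=
    congrArg card (filter_congr fun i _ => and_congr_right fun hi => by rw [htail i hi])
  have hs := hsplit s
  have ht := hsplit t
  omega

theorem initialRank_lt_of_lt {s t : Perm (Fin n)} {ℓ : Fin n}
    (htail : ∀ j, ℓ < j → s j = t j) (hlt : s ℓ < t ℓ) : s.initialRank ℓ < t.initialRank ℓ := by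
  have hrank (u : Perm (Fin n)) : u.initialRank ℓ = 1 + #{i | i ≤ ℓ ∧ u i < u ℓ} := by
    refine congrArg (1 + ·) (congrArg card (filter_congr fun i _ => ?_))
    exact ⟨fun h => ⟨h.1.le, h.2⟩, fun h => ⟨h.1.lt_of_ne (by rintro rfl; exact h.2.false), h.2⟩⟩
  rw [hrank, hrank, ← card_filter_le_apply_lt_eq htail, add_lt_add_iff_left]
  refine card_lt_card ((ssubset_iff_of_subset ?_).mpr ⟨ℓ, by simp [hlt], by simp⟩)
  exact monotone_filter_right _ fun i _ h => ⟨h.1, h.2.trans hlt⟩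

theorem apply_eq_of_initialRank_eq {s t : Perm (Fin n)} {ℓ : Fin n}
    (htail : ∀ j, ℓ < j → s j = t j) (h : s.initialRank ℓ = t.initialRank ℓ) : s ℓ = t ℓ := by
  rcases lt_trichotomy (s ℓ) (t ℓ) with hlt | heq | hgt
  · exact absurd h (initialRank_lt_of_lt htail hlt).ne
  · exact heq
  · exact absurd h (initialRank_lt_of_lt (fun j hj => (htail j hj).symm) hgt).ne'

theorem eq_of_initialRank_eq {s t : Perm (Fin n)} {k : Fin n} (hpre : ∀ i < k, s i = t i)
    (hrank : ∀ ℓ, k < ℓ → s.initialRank ℓ = t.initialRank ℓ) : s = t := by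
  have htail : ∀ ℓ, k < ℓ → s ℓ = t ℓ := by
    intro ℓ
    induction ℓ using WellFoundedGT.induction with
    | _ ℓ ih => exact fun hk =>
        apply_eq_of_initialRank_eq (fun j hj => ih j hj (hk.trans hj)) (hrank ℓ hk)
  exact eq_of_forall_ne_apply_eq fun i hi => (lt_or_gt_of_ne hi).elim (hpre i) (htail i)

end Equiv.Perm

theorem irank_comp_perm {n : ℕ} {x : Fin n → ℝ} (hx : StrictAnti x) (s : Equiv.Perm (Fin n))
    (ℓ : Fin n) : irank (x ∘ s) ℓ = s.initialRank ℓ := by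
  simp only [irank, Equiv.Perm.initialRank, Function.comp_apply, hx.lt_iff_gt]

section Probability

variable {Ω : Type*} [MeasurableSpace Ω] {P : Measure Ω}

theorem ProbabilityTheory.IndepFun.measure_eq_eq_zero {β : Type*} [MeasurableSpace β]
    [MeasurableEq β] [IsFiniteMeasure P] {f g : Ω → β} (hfg : IndepFun f g P)
    (hf : Measurable f) (hg : Measurable g) [NullSingletonClass (P.map g)] :
    P {ω | f ω = g ω} = 0 := by
  have hdiag : MeasurableSet {q : β × β | q.1 = q.2} := measurableSet_diagonal
  rw [show {ω | f ω = g ω} = (fun ω => (f ω, g ω)) ⁻¹' {q | q.1 = q.2} from rfl,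
    ← Measure.map_apply (hf.prodMk hg) hdiag,
    (indepFun_iff_map_prod_eq_prod_map_map hf.aemeasurable hg.aemeasurable).mp hfg,
    Measure.prod_apply hdiag]
  simp [Set.preimage]

theorem ae_measure_fiber_ne_zero {β : Type*} [Countable β] (P : Measure Ω) (g : Ω → β) :
    ∀ᵐ ω ∂P, P {ω' | g ω' = g ω} ≠ 0 := by
  refine measure_mono_null (t := ⋃ b : {b // P {ω | g ω = b} = 0}, {ω | g ω = b}) ?_
    (measure_iUnion_null fun b => b.2)
  intro ω hω
  exact Set.mem_iUnion.mpr ⟨⟨g ω, not_not.mp hω⟩, rfl⟩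

theorem ae_eq_of_ae_le_of_map_eq [IsFiniteMeasure P] {f g : Ω → ℝ} (hf : Measurable f)
    (hg : Measurable g) (hfg : f ≤ᵐ[P] g) (hmap : P.map f = P.map g) : f =ᵐ[P] g := by
  have hcdf : ∀ q : ℚ, {ω | g ω ≤ q} =ᵐ[P] {ω | f ω ≤ q} := by
    intro q
    refine ae_eq_of_ae_subset_of_measure_ge ?_ ?_
      (measurableSet_le hg measurable_const).nullMeasurableSet (measure_ne_top _ _)
    · filter_upwards [hfg] with ω h hω using h.trans hω
    · have := congrArg (· (Set.Iic (q : ℝ))) hmap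
      simp only [Measure.map_apply hf measurableSet_Iic, Measure.map_apply hg measurableSet_Iic]
        at this
      exact this.le
  filter_upwards [hfg, ae_all_iff.mpr hcdf] with ω hle hq
  refine le_antisymm hle (not_lt.mp fun hlt => ?_)
  obtain ⟨q, hfq, hqg⟩ := exists_rat_btwn hlt
  exact absurd ((Iff.of_eq (hq q)).mpr hfq.le) (not_le.mpr hqg)

theorem map_ne_map_of_ae_lt [IsFiniteMeasure P] [NeZero P] {f g : Ω → ℝ} (hf : Measurable f)
    (hg : Measurable g) (hlt : ∀ᵐ ω ∂P, f ω < g ω) : P.map f ≠ P.map g := fun hmap => by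
  obtain ⟨ω, h₁, h₂⟩ :=
    (hlt.and (ae_eq_of_ae_le_of_map_eq hf hg (hlt.mono fun _ => le_of_lt) hmap)).exists
  exact h₁.ne h₂

theorem injective_map_eval_of_ae_strictAnti [IsFiniteMeasure P] [NeZero P] {ι : Type*}
    [LinearOrder ι] {D : Ω → ι → ℝ} (hD : Measurable D) (hanti : ∀ᵐ ω ∂P, StrictAnti (D ω)) :
    Function.Injective fun m => P.map fun ω => D ω m := by
  intro m₁ m₂ h
  by_contra hne
  rcases lt_or_gt_of_ne hne with hlt | hlt
  · exact map_ne_map_of_ae_lt (by fun_prop) (by fun_prop) (hanti.mono fun ω hω => hω hlt) h.symm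
  · exact map_ne_map_of_ae_lt (by fun_prop) (by fun_prop) (hanti.mono fun ω hω => hω hlt) h

theorem ProbabilityTheory.IndepFun.comp_of_map_eq {Ω' α β γ : Type*} [MeasurableSpace Ω']
    [MeasurableSpace α] [MeasurableSpace β] [MeasurableSpace γ] {P' : Measure Ω'}
    {Y : Ω → α} {Z : Ω' → α} {f : α → β} {g : α → γ} (h : IndepFun (f ∘ Y) (g ∘ Y) P)
    (hY : Measurable Y) (hZ : Measurable Z) (hf : Measurable f) (hg : Measurable g)
    (hlaw : P.map Y = P'.map Z) : IndepFun (f ∘ Z) (g ∘ Z) P' := by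
  have hpre : ∀ S, MeasurableSet S → P' (Z ⁻¹' S) = P (Y ⁻¹' S) := fun S hS => by
    rw [← Measure.map_apply hZ hS, ← hlaw, Measure.map_apply hY hS]
  rw [indepFun_iff_measure_inter_preimage_eq_mul] at h ⊢
  intro A B hA hB
  simp only [Set.preimage_comp, ← Set.preimage_inter]
  rw [hpre _ ((hf hA).inter (hg hB)), hpre _ (hf hA), hpre _ (hg hB), Set.preimage_inter]
  exact h A B hA hB

end Probability

theorem IsIUD.ae_injective {Ω : Type} [MeasurableSpace Ω] {P : Measure Ω}
    [IsProbabilityMeasure P] {n : ℕ} {X : Ω → Fin n → ℝ}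
    (hX : IsIUD P X) : ∀ᵐ ω ∂P, Function.Injective (X ω) := by
  obtain ⟨hXm, hXind, hXlaw⟩ := hX
  simp_rw [Function.injective_iff_pairwise_ne, Pairwise, ae_all_iff]
  intro i j hij
  have : NullSingletonClass (P.map fun ω => X ω j) := by rw [hXlaw j]; infer_instance
  exact measure_eq_zero_iff_ae_notMem.mp
    ((hXind.indepFun hij).measure_eq_eq_zero (hXm i) (hXm j))

theorem strictAnti_descArr {n : ℕ} {a : Fin n → ℝ} (ha : Function.Injective a) :
    StrictAnti (descArr n a) := fun _ _ hij =>
  (Tuple.monotone_sort a).strictMono_of_injective (ha.comp (Tuple.sort a).injective)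
    (Fin.rev_lt_rev.mpr hij)

def StrongRankIndep {Ω : Type*} [MeasurableSpace Ω] (P : Measure Ω) {n : ℕ}
    (Y : Ω → Fin n → ℝ) : Prop :=
  ∀ k : Fin n, IndepFun (fun ω (ℓ : {ℓ : Fin n // k < ℓ}) => irank (Y ω) ℓ.1)
    (fun ω (i : {i : Fin n // i ≤ k}) => Y ω i.1) P

theorem StrongRankIndep.of_map_eq {Ω Ω' : Type*} [MeasurableSpace Ω] [MeasurableSpace Ω']
    {P : Measure Ω} {P' : Measure Ω'} {n : ℕ} {Y : Ω → Fin n → ℝ} {Z : Ω' → Fin n → ℝ}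
    (h : StrongRankIndep P Y) (hY : Measurable Y) (hZ : Measurable Z)
    (hlaw : P.map Y = P'.map Z) : StrongRankIndep P' Z := fun k =>
  (h k).comp_of_map_eq (f := fun y (ℓ : {ℓ : Fin n // k < ℓ}) => irank y ℓ.1)
    (g := fun y (i : {i : Fin n // i ≤ k}) => y i.1) hY hZ
    (measurable_pi_lambda _ fun ℓ => measurable_irank ℓ.1) (by fun_prop) hlaw

section Rearrangement

variable {Ω : Type*} [MeasurableSpace Ω] {P : Measure Ω} [IsProbabilityMeasure P] {n : ℕ}
  {D : Ω → Fin n → ℝ} {μ : Ω → Equiv.Perm (Fin n)}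

theorem map_eval_perm_eq_of_strongRankIndep (hD : Measurable D)
    (hanti : ∀ᵐ ω ∂P, StrictAnti (D ω)) (hμ : ∀ s, MeasurableSet {ω | μ ω = s})
    (hindep : ∀ s B, MeasurableSet B →
      P ({ω | D ω ∈ B} ∩ {ω | μ ω = s}) = P {ω | D ω ∈ B} * P {ω | μ ω = s})
    (hSRI : StrongRankIndep P fun ω i => D ω (μ ω i)) {k : Fin n}
    (hpre : ∀ s t, P {ω | μ ω = s} ≠ 0 → P {ω | μ ω = t} ≠ 0 → ∀ i < k, s i = t i)
    {s : Equiv.Perm (Fin n)} (hs : P {ω | μ ω = s} ≠ 0) :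
    P.map (fun ω => D ω (s k)) = P.map (fun ω => D ω (μ ω k)) := by
  set R := fun ω (ℓ : {ℓ : Fin n // k < ℓ}) => irank (fun i => D ω (μ ω i)) ℓ.1
  set r := fun ℓ : {ℓ : Fin n // k < ℓ} => s.initialRank ℓ.1
  have hR : R ⁻¹' {r} =ᵐ[P] {ω | μ ω = s} := by
    filter_upwards [hanti, ae_measure_fiber_ne_zero P μ] with ω hω hωs
    refine propext ⟨fun h => ?_, fun h => ?_⟩
    · exact Equiv.Perm.eq_of_initialRank_eq (hpre _ _ hωs hs) fun ℓ hℓ =>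
        (irank_comp_perm hω _ ℓ).symm.trans (congrFun h ⟨ℓ, hℓ⟩)
    · funext ℓ
      change irank (D ω ∘ μ ω) ℓ.1 = _
      rw [(h : μ ω = s)]
      exact irank_comp_perm hω s ℓ.1
  ext B hB
  have hprod : P (R ⁻¹' {r} ∩ {ω | D ω (μ ω k) ∈ B})
      = P (R ⁻¹' {r}) * P {ω | D ω (μ ω k) ∈ B} :=
    (hSRI k).measure_inter_preimage_eq_mul {r} {z | z ⟨k, le_rfl⟩ ∈ B}
      (measurableSet_singleton r) (measurable_pi_apply _ hB)
  have hfiber : {ω | μ ω = s} ∩ {ω | D ω (μ ω k) ∈ B}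
      = {ω | D ω ∈ {x | x (s k) ∈ B}} ∩ {ω | μ ω = s} := by
    ext ω
    constructor <;> rintro ⟨h₁, h₂⟩ <;> simp_all
  rw [measure_congr (hR.inter (Filter.EventuallyEq.refl _ {ω | D ω (μ ω k) ∈ B})),
    measure_congr hR, hfiber, hindep s {x | x (s k) ∈ B} (measurable_pi_apply _ hB),
    mul_comm] at hprod
  have hZk : Measurable fun ω => D ω (μ ω k) :=
    measurable_apply_of_measurableSet_fiber hμ (f := fun t ω => D ω (t k)) fun _ => by fun_prop
  rw [Measure.map_apply (by fun_prop) hB, Measure.map_apply hZk hB]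
  exact (ENNReal.mul_right_inj hs (measure_ne_top _ _)).mp hprod

theorem exists_ae_eq_of_strongRankIndep (hD : Measurable D)
    (hanti : ∀ᵐ ω ∂P, StrictAnti (D ω)) (hμ : ∀ s, MeasurableSet {ω | μ ω = s})
    (hindep : ∀ s B, MeasurableSet B →
      P ({ω | D ω ∈ B} ∩ {ω | μ ω = s}) = P {ω | D ω ∈ B} * P {ω | μ ω = s})
    (hSRI : StrongRankIndep P fun ω i => D ω (μ ω i)) :
    ∃ s, ∀ᵐ ω ∂P, μ ω = s := by
  have hagree : ∀ k s t, P {ω | μ ω = s} ≠ 0 → P {ω | μ ω = t} ≠ 0 → s k = t k := by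
    intro k
    induction k using WellFoundedLT.induction with
    | _ k ih =>
      intro s t hs ht
      have hpre : ∀ s t, P {ω | μ ω = s} ≠ 0 → P {ω | μ ω = t} ≠ 0 → ∀ i < k, s i = t i :=
        fun s t hs ht i hi => ih i hi s t hs ht
      exact injective_map_eval_of_ae_strictAnti hD hanti
        ((map_eval_perm_eq_of_strongRankIndep hD hanti hμ hindep hSRI hpre hs).trans
          (map_eval_perm_eq_of_strongRankIndep hD hanti hμ hindep hSRI hpre ht).symm)
  have hsupp := ae_measure_fiber_ne_zero P μ
  obtain ⟨ω₀, hω₀⟩ := hsupp.exists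
  exact ⟨μ ω₀, hsupp.mono fun ω hω => Equiv.ext fun k => hagree k _ _ hω hω₀⟩

end Rearrangement

theorem strong_rank_independence_and_indep_implies_constant_general {n : ℕ}
    {Ω₁ : Type} [MeasurableSpace Ω₁] (P₁ : Measure Ω₁) [IsProbabilityMeasure P₁]
    (X : Ω₁ → Fin n → ℝ) (hX : IsIUD P₁ X)
    (μ : Ω₁ → Equiv.Perm (Fin n))
    (hμmeas : ∀ s : Equiv.Perm (Fin n), MeasurableSet {ω | μ ω = s})
    (hindep : ∀ (s : Equiv.Perm (Fin n)) (B : Set (Fin n → ℝ)), MeasurableSet B →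
      P₁ ({ω | descArr n (X ω) ∈ B} ∩ {ω | μ ω = s})
        = P₁ {ω | descArr n (X ω) ∈ B} * P₁ {ω | μ ω = s})
    {Ω₂ : Type} [MeasurableSpace Ω₂] (P₂ : Measure Ω₂)
    (Y : Ω₂ → Fin n → ℝ) (hY : Measurable Y)
    (hlaw : P₂.map Y = P₁.map (fun ω i => descArr n (X ω) (μ ω i)))
    (hSRI : ∀ k : Fin n, ProbabilityTheory.IndepFun
      (fun ω (ℓ : {ℓ : Fin n // k < ℓ}) => irank (Y ω) ℓ.1)
      (fun ω (i : {i : Fin n // i ≤ k}) => Y ω i.1) P₂) :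
    ∃ s : Equiv.Perm (Fin n), P₁ {ω | μ ω = s} = 1 ∧
      P₂.map Y = P₁.map (fun ω i => descArr n (X ω) (s i)) := by
  have hD : Measurable fun ω => descArr n (X ω) :=
    (measurable_descArr n).comp (measurable_pi_lambda _ hX.1)
  have hZ : Measurable fun ω i => descArr n (X ω) (μ ω i) :=
    measurable_apply_of_measurableSet_fiber hμmeas (f := fun s ω i => descArr n (X ω) (s i))
      fun _ => by fun_prop
  obtain ⟨s, hs⟩ := exists_ae_eq_of_strongRankIndep hD
    (hX.ae_injective.mono fun _ => strictAnti_descArr) hμmeas hindep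
    (StrongRankIndep.of_map_eq hSRI hY hZ hlaw)
  refine ⟨s, ?_, ?_⟩
  · rw [← measure_univ (μ := P₁)]
    exact (ae_iff_measure_eq (hμmeas s).nullMeasurableSet).mp hs
  · rw [hlaw]
    exact Measure.map_congr (hs.mono fun ω h => by simp only [h])

/-- If a rearrangement `Y =d X↓^μ` of the i.u.d. sequence `X` satisfies the strong rank
independence condition (for each `k`, the ranks `(R_{k+1},...,R_n)` are independent of
`(Y_1,...,Y_k)`), and the value data `X↓` and the arrival data `μ` are independent, then
`Y` is a constant rearrangement: `μ` almost surely takes a single value `s ∈ S_n`, i.e.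
`Y =d X↓^s`. -/
theorem strong_rank_independence_and_indep_implies_constant {n : ℕ}
    {Ω₁ : Type} [MeasurableSpace Ω₁] (P₁ : Measure Ω₁) [IsProbabilityMeasure P₁]
    (X : Ω₁ → Fin n → ℝ) (hX : IsIUD P₁ X)
    (μ : Ω₁ → Equiv.Perm (Fin n))
    (hμmeas : ∀ s : Equiv.Perm (Fin n), MeasurableSet {ω | μ ω = s})
    (hindep : ∀ (s : Equiv.Perm (Fin n)) (B : Set (Fin n → ℝ)), MeasurableSet B →
      P₁ ({ω | descArr n (X ω) ∈ B} ∩ {ω | μ ω = s})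
        = P₁ {ω | descArr n (X ω) ∈ B} * P₁ {ω | μ ω = s})
    {Ω₂ : Type} [MeasurableSpace Ω₂] (P₂ : Measure Ω₂) [IsProbabilityMeasure P₂]
    (Y : Ω₂ → Fin n → ℝ) (hY : Measurable Y)
    (hlaw : P₂.map Y = P₁.map (fun ω i => descArr n (X ω) (μ ω i)))
    (hSRI : ∀ k : Fin n, ProbabilityTheory.IndepFun
      (fun ω (ℓ : {ℓ : Fin n // k < ℓ}) => irank (Y ω) ℓ.1)
      (fun ω (i : {i : Fin n // i ≤ k}) => Y ω i.1) P₂) :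
    ∃ s : Equiv.Perm (Fin n), P₁ {ω | μ ω = s} = 1 ∧
      P₂.map Y = P₁.map (fun ω i => descArr n (X ω) (s i)) :=
  strong_rank_independence_and_indep_implies_constant_general P₁ X hX μ hμmeas hindep P₂ Y hY hlaw
    hSRI
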